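/- arXiv:1110.4847 — 3 statements merged into one kernel-verified Lean document; each statement's English description precedes it below -/
import Mathlib

section
/- For every integer n ≥ 1, the n-th elementary symmetric function satisfies e_n = ∑_{m ⊢ n} ∏_{l≥1} (1/m_l!) · ((-1)^{l-1}/l)^{m_l} · ∏_{l≥1} p_l^{m_l}, where the sum ranges over all multiplicity vectors m with ∑_{l≥1} l·m_l = n. -/
/-!
Multiply by `n` and expand `n e_n` by Newton's identity `n e_n = ∑ᵢ (-1)^(i-1) p_i e_{n-i}`,
using the claim for `e_{n-i}` by strong induction. Adding a part `i` to a partition `ν` of `n - i`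
gives a partition `μ` of `n`, and the coefficient of `μ` times `m_i · i` is `(-1)^(i-1)` times the
coefficient of `ν`. Every `μ` arises once for each distinct part `i`, so it is counted with total
weight `∑ᵢ m_i · i = n`.
-/

open MvPolynomial Finset

namespace Nat.Partition

theorem sum_count_mul_eq {n : ℕ} (μ : n.Partition) :
    ∑ i ∈ μ.parts.toFinset, μ.parts.count i * i = n := by
  simpa [μ.parts_sum] using (sum_multiset_count μ.parts).symm

theorem sum_sum_toFinset_eq_sum_Icc {M : Type*} [AddCommMonoid M] (n : ℕ)
    (g : Multiset ℕ → ℕ → M) :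
    ∑ μ : n.Partition, ∑ i ∈ μ.parts.toFinset, g μ.parts i =
      ∑ i ∈ Icc 1 n, ∑ ν : (n - i).Partition, g (i ::ₘ ν.parts) i := by
  classical
  have htoFinset (μ : n.Partition) : μ.parts.toFinset = {i ∈ Icc 1 n | i ∈ μ.parts} := by
    ext i
    simpa using fun hi => ⟨μ.parts_pos hi, μ.le_of_mem_parts hi⟩
  simp_rw [htoFinset, sum_filter]
  rw [sum_comm]
  refine sum_congr rfl fun i hi => ?_
  obtain ⟨hi1, hin⟩ := mem_Icc.mp hi
  rw [← sum_filter, sum_subtype _ (p := fun μ => i ∈ μ.parts) (by simp),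
    ← (partitionWithPartEquiv hi1 hin).symm.sum_comp]
  simp

end Nat.Partition

namespace MvPolynomial

variable (σ : Type*) [Fintype σ]

theorem natCast_mul_esymm_eq_sum_Icc (R : Type*) [CommRing R] (n : ℕ) :
    (n : MvPolynomial σ R) * esymm σ R n =
      ∑ i ∈ Icc 1 n, (-1) ^ (i - 1) * psum σ R i * esymm σ R (n - i) := by
  classical
  rw [mul_esymm_eq_sum, mul_sum]
  refine sum_nbij' Prod.snd (fun i => (n - i, i)) ?_ ?_ ?_ (fun _ _ => rfl) ?_
  · intro a ha
    simp only [mem_filter, HasAntidiagonal.mem_antidiagonal, mem_Icc] at ha ⊢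
    omega
  · intro i hi
    simp only [mem_Icc, mem_filter, HasAntidiagonal.mem_antidiagonal, tsub_lt_self_iff] at hi ⊢
    omega
  · rintro ⟨j, i⟩ ha
    simp only [mem_filter, HasAntidiagonal.mem_antidiagonal, Prod.mk.injEq, and_true] at ha ⊢
    omega
  · rintro ⟨j, i⟩ ha
    obtain ⟨rfl, hj⟩ : j + i = n ∧ j < n := by simpa using ha
    obtain ⟨k, rfl⟩ : ∃ k, i = k + 1 := ⟨i - 1, by omega⟩
    have hsign : (-1 : MvPolynomial σ R) ^ (j + (k + 1) + 1) * (-1) ^ j = (-1) ^ k := by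
      rw [← pow_add, show j + (k + 1) + 1 + j = k + 2 * (j + 1) by ring, pow_add, pow_mul,
        neg_one_sq, one_pow, mul_one]
    simp only [Nat.add_sub_cancel]
    rw [← hsign]
    ring

noncomputable section PowerSumExpansion

variable (K : Type*) [Field K]

def esymmPsumCoeff (l m : ℕ) : K := (1 / m.factorial : K) * ((-1) ^ (l - 1) / (l : K)) ^ m

/-- The summand for the multiplicity vector `m_l = s.count l`. -/
def esymmPsumTerm (n : ℕ) (s : Multiset ℕ) : MvPolynomial σ K :=
  ∏ l ∈ Icc 1 n, C (esymmPsumCoeff K l (s.count l)) * psum σ K l ^ s.count l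

variable {K}

@[simp]
theorem esymmPsumCoeff_zero (l : ℕ) : esymmPsumCoeff K l 0 = 1 := by
  simp [esymmPsumCoeff]

theorem neg_one_pow_mul_esymmPsumCoeff [CharZero K] {l : ℕ} (hl : l ≠ 0) (m : ℕ) :
    (-1) ^ (l - 1) * esymmPsumCoeff K l m = (m + 1) * l * esymmPsumCoeff K l (m + 1) := by
  have hl' : (l : K) ≠ 0 := Nat.cast_ne_zero.mpr hl
  simp only [esymmPsumCoeff, Nat.factorial_succ, pow_succ]
  push_cast
  field_simp

variable {σ}

theorem esymmPsumTerm_eq_of_le {k n : ℕ} (hkn : k ≤ n) {s : Multiset ℕ} (hs : ∀ l ∈ s, l ≤ k) :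
    esymmPsumTerm σ K k s = esymmPsumTerm σ K n s := by
  refine prod_subset (Icc_subset_Icc_right hkn) fun l hl hlk => ?_
  have : s.count l = 0 := Multiset.count_eq_zero.mpr fun hls => by
    have := hs l hls
    simp only [mem_Icc] at hl hlk
    omega
  simp [this]

theorem esymmPsumTerm_cons [CharZero K] {n i : ℕ} (hi : i ∈ Icc 1 n) (s : Multiset ℕ) :
    C (((i ::ₘ s).count i : K) * i) * esymmPsumTerm σ K n (i ::ₘ s) =
      (-1) ^ (i - 1) * psum σ K i * esymmPsumTerm σ K n s := by
  have hi0 : i ≠ 0 := Nat.one_le_iff_ne_zero.mp (mem_Icc.mp hi).1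
  have htail : ∀ l ∈ (Icc 1 n).erase i,
      C (esymmPsumCoeff K l ((i ::ₘ s).count l)) * psum σ K l ^ (i ::ₘ s).count l =
        C (esymmPsumCoeff K l (s.count l)) * psum σ K l ^ s.count l := by
    intro l hl
    rw [Multiset.count_cons_of_ne (ne_of_mem_erase hl)]
  rw [esymmPsumTerm, esymmPsumTerm, ← mul_prod_erase _ _ hi, ← mul_prod_erase _ _ hi,
    prod_congr rfl htail, Multiset.count_cons_self]
  have hcoeff := congrArg (C (σ := σ)) (neg_one_pow_mul_esymmPsumCoeff (K := K) hi0 (s.count i))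
  simp only [map_mul, map_pow, map_neg, map_one, map_natCast, map_add] at hcoeff ⊢
  push_cast
  linear_combination (-psum σ K i ^ (s.count i + 1) * ∏ l ∈ (Icc 1 n).erase i,
    C (esymmPsumCoeff K l (s.count l)) * psum σ K l ^ s.count l) * hcoeff

theorem esymm_eq_sum_partition_esymmPsumTerm [CharZero K] (n : ℕ) :
    esymm σ K n = ∑ μ : n.Partition, esymmPsumTerm σ K n μ.parts := by
  induction n using Nat.strong_induction_on with
  | _ n ih =>
  rcases Nat.eq_zero_or_pos n with rfl | hn
  · simp [esymmPsumTerm]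
  refine mul_left_cancel₀ (Nat.cast_ne_zero.mpr hn.ne' : (n : MvPolynomial σ K) ≠ 0) ?_
  calc (n : MvPolynomial σ K) * esymm σ K n
      = ∑ i ∈ Icc 1 n, ∑ ν : (n - i).Partition,
          (-1) ^ (i - 1) * psum σ K i * esymmPsumTerm σ K n ν.parts := by
        rw [natCast_mul_esymm_eq_sum_Icc]
        refine sum_congr rfl fun i hi => ?_
        rw [ih (n - i) (Nat.sub_lt hn (mem_Icc.mp hi).1), mul_sum]
        refine sum_congr rfl fun ν _ => ?_
        rw [esymmPsumTerm_eq_of_le (Nat.sub_le n i) fun l hl => ν.le_of_mem_parts hl]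
    _ = ∑ i ∈ Icc 1 n, ∑ ν : (n - i).Partition,
          C (((i ::ₘ ν.parts).count i : K) * i) * esymmPsumTerm σ K n (i ::ₘ ν.parts) :=
        sum_congr rfl fun i hi => sum_congr rfl fun ν _ => (esymmPsumTerm_cons hi _).symm
    _ = ∑ μ : n.Partition, ∑ i ∈ μ.parts.toFinset,
          C ((μ.parts.count i : K) * i) * esymmPsumTerm σ K n μ.parts :=
        (Nat.Partition.sum_sum_toFinset_eq_sum_Icc n
          fun s i => C ((s.count i : K) * i) * esymmPsumTerm σ K n s).symm
    _ = (n : MvPolynomial σ K) * ∑ μ : n.Partition, esymmPsumTerm σ K n μ.parts := by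
        rw [mul_sum]
        refine sum_congr rfl fun μ _ => ?_
        rw [← sum_mul, ← map_sum, ← map_natCast C]
        congr 2
        exact_mod_cast μ.sum_count_mul_eq

end PowerSumExpansion

end MvPolynomial

theorem elementary_in_power_sums_general (N n : ℕ) :
    esymm (Fin N) ℚ n =
      ∑ μ : Nat.Partition n,
        ∏ l ∈ Finset.Icc 1 n,
          C ((1 / (μ.parts.count l).factorial : ℚ) *
              ((-1) ^ (l - 1) / (l : ℚ)) ^ (μ.parts.count l)) *
            (psum (Fin N) ℚ l) ^ (μ.parts.count l) :=
  esymm_eq_sum_partition_esymmPsumTerm n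

/-- **MPS paper, Lemma 3.1 (1).** The expansion of the `n`-th elementary symmetric
function in power sums: `e_n = ∑_{m ⊢ n} ∏_{l ≥ 1} (1/m_l!) ((-1)^{l-1}/l)^{m_l} p_l^{m_l}`,
where the sum is over multiplicity vectors `m` with `∑ l·m_l = n`, here encoded as
partitions `μ` of `n` via `m_l = μ.parts.count l`. The identity holds in the ring of
symmetric polynomials in any number `N` of variables over `ℚ`. -/
theorem elementary_in_power_sums (N n : ℕ) (hn : 1 ≤ n) :
    esymm (Fin N) ℚ n =
      ∑ μ : Nat.Partition n,
        ∏ l ∈ Finset.Icc 1 n,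
          C ((1 / (μ.parts.count l).factorial : ℚ) *
              ((-1) ^ (l - 1) / (l : ℚ)) ^ (μ.parts.count l)) *
            (psum (Fin N) ℚ l) ^ (μ.parts.count l) :=
  elementary_in_power_sums_general N n
end

section
/- For every integer n ≥ 1, the following identity holds in the field ℚ(q) of rational functions in one variable q over ℚ: q^{n(n-1)/2}/((1-q)(1-q^2)···(1-q^n)) = ∑_{m ⊢ n} ∏_{l≥1} (1/m_l!) · ((-1)^{l-1}/(l·(1-q^l)))^{m_l}, where the sum ranges over all multiplicity vectors m with ∑_{l≥1} l·m_l = n. -/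
/-!
Both sides satisfy `X 0 = 1` and the Newton recurrence
`n X_n = ∑_{k=1}^n (-1)^{k-1} p_k X_{n-k}` with `p_k = 1/(1-q^k)`, the principal specialization
of the power sum `p_k`; since `n` is invertible in characteristic zero, the recurrence determines
the sequence. For the partition sum it is a double count: `n = ∑_k k m_k`, and adding a part `k`
is a bijection from the partitions of `n - k` onto the partitions of `n` having `k` as a part,
which turns `1 / (m_k - 1)!` into `m_k / m_k!`. For `E_n = q^{n(n-1)/2} / ∏_{i ≤ n} (1 - q^i)` it
follows by induction from `(1 - q^{n+1}) E_{n+1} = q^n E_n`, writing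
`1 - q^{n+1} = (1 - q^k) + q^k (1 - q^{n+1-k})` in the `k`-th term and using the alternating sum
`∑_{k=0}^n (-1)^k E_{n-k} = q^n E_n`.
-/

open Finset

theorem Finset.sum_Icc_one_eq_sum_range {M : Type*} [AddCommMonoid M] (f : ℕ → M) (n : ℕ) :
    ∑ k ∈ Icc 1 n, f k = ∑ k ∈ range n, f (k + 1) := by
  rw [range_eq_Ico, sum_Ico_add' f 0 n 1]
  rfl

theorem Nat.Partition.toFinset_parts_subset_Icc {n : ℕ} (μ : n.Partition) :
    μ.parts.toFinset ⊆ Icc 1 n := fun _ hi =>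
  mem_Icc.2 ⟨μ.parts_pos (Multiset.mem_toFinset.1 hi),
    μ.le_of_mem_parts (Multiset.mem_toFinset.1 hi)⟩

theorem Nat.Partition.sum_count_mul {n : ℕ} (μ : n.Partition) :
    ∑ k ∈ Icc 1 n, μ.parts.count k * k = n := by
  simpa [μ.parts_sum] using (sum_multiset_count_of_subset _ _ μ.toFinset_parts_subset_Icc).symm

section Recurrence

variable {K : Type*} [Field K] [CharZero K]

theorem eq_of_natCast_mul_eq_sum {X Y : ℕ → K} (c : ℕ → K) (h0 : X 0 = Y 0)
    (hX : ∀ n, n * X n = ∑ k ∈ Icc 1 n, c k * X (n - k))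
    (hY : ∀ n, n * Y n = ∑ k ∈ Icc 1 n, c k * Y (n - k)) : X = Y := by
  funext n
  induction n using Nat.strong_induction_on with
  | _ n ih =>
    rcases n.eq_zero_or_pos with rfl | hn
    · exact h0
    · refine mul_left_cancel₀ (Nat.cast_ne_zero.2 hn.ne') ?_
      rw [hX, hY]
      refine sum_congr rfl fun k hk => ?_
      rw [ih (n - k) (by grind)]

end Recurrence

section PartitionSum

variable {K : Type*} [Field K] (a : ℕ → K)

def partitionWeight (t : Finset ℕ) (s : Multiset ℕ) : K :=
  ∏ l ∈ t, 1 / ((s.count l).factorial : K) * a l ^ s.count l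

def partitionSum (n : ℕ) : K :=
  ∑ μ : n.Partition, partitionWeight a (Icc 1 n) μ.parts

theorem partitionSum_zero : partitionSum a 0 = 1 := by
  simp [partitionSum, partitionWeight]

theorem partitionWeight_eq_of_subset {s : Multiset ℕ} {t t' : Finset ℕ} (hs : s.toFinset ⊆ t)
    (ht : t ⊆ t') : partitionWeight a t s = partitionWeight a t' s :=
  prod_subset ht fun l _ hl => by
    simp [Multiset.count_eq_zero_of_notMem fun h => hl (hs (Multiset.mem_toFinset.2 h))]

variable [CharZero K]

theorem count_add_one_mul_partitionWeight_cons {t : Finset ℕ} {k : ℕ} (hk : k ∈ t)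
    (s : Multiset ℕ) :
    ((s.count k : K) + 1) * partitionWeight a t (k ::ₘ s) = a k * partitionWeight a t s := by
  have hrest : ∀ l ∈ t.erase k,
      1 / (((k ::ₘ s).count l).factorial : K) * a l ^ (k ::ₘ s).count l
        = 1 / ((s.count l).factorial : K) * a l ^ s.count l := fun l hl => by
    rw [Multiset.count_cons_of_ne (ne_of_mem_erase hl)]
  rw [partitionWeight, partitionWeight, ← mul_prod_erase _ _ hk, ← mul_prod_erase _ _ hk,
    prod_congr rfl hrest, Multiset.count_cons_self, Nat.factorial_succ, pow_succ]
  have : (s.count k : K) + 1 ≠ 0 := Nat.cast_add_one_ne_zero _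
  push_cast
  field_simp

theorem sum_count_mul_partitionWeight {n k : ℕ} (hk1 : 1 ≤ k) (hkn : k ≤ n) :
    ∑ μ : n.Partition, (μ.parts.count k : K) * partitionWeight a (Icc 1 n) μ.parts
      = a k * partitionSum a (n - k) := by
  rw [← Fintype.sum_subtype_add_sum_subtype (fun μ : n.Partition => k ∈ μ.parts),
    Fintype.sum_eq_zero (fun μ : {μ : n.Partition // k ∉ μ.parts} => _)
      fun μ => by simp [Multiset.count_eq_zero.2 μ.2],
    add_zero, ← (Nat.Partition.partitionWithPartEquiv hk1 hkn).symm.sum_comp, partitionSum,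
    mul_sum]
  refine sum_congr rfl fun ν _ => ?_
  rw [Nat.Partition.partitionWithPartEquiv_symm_apply_parts, Multiset.count_cons_self,
    partitionWeight_eq_of_subset a ν.toFinset_parts_subset_Icc
      (Icc_subset_Icc_right (Nat.sub_le n k)),
    ← count_add_one_mul_partitionWeight_cons a (mem_Icc.2 ⟨hk1, hkn⟩)]
  push_cast
  rfl

theorem natCast_mul_partitionSum (n : ℕ) :
    n * partitionSum a n = ∑ k ∈ Icc 1 n, k * a k * partitionSum a (n - k) := by
  have hcount : ∀ μ : n.Partition, (n : K) * partitionWeight a (Icc 1 n) μ.parts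
      = ∑ k ∈ Icc 1 n, k * ((μ.parts.count k : K) * partitionWeight a (Icc 1 n) μ.parts) := by
    intro μ
    have hn : (n : K) = ∑ k ∈ Icc 1 n, (μ.parts.count k : K) * k := by
      exact_mod_cast μ.sum_count_mul.symm
    rw [hn, sum_mul]
    exact sum_congr rfl fun k _ => by ring
  rw [partitionSum, mul_sum, sum_congr rfl fun μ _ => hcount μ, sum_comm]
  refine sum_congr rfl fun k hk => ?_
  rw [← mul_sum, sum_count_mul_partitionWeight a (mem_Icc.1 hk).1 (mem_Icc.1 hk).2, mul_assoc]

end PartitionSum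

section PrincipalEsymm

variable {K : Type*} [Field K] (q : K)

/-- `e_n(1, q, q², …)`. -/
def principalEsymm (n : ℕ) : K :=
  q ^ (n * (n - 1) / 2) / ∏ i ∈ Icc 1 n, (1 - q ^ i)

theorem principalEsymm_zero : principalEsymm q 0 = 1 := by
  simp [principalEsymm]

variable {q}

theorem one_sub_pow_ne_zero_of_not_isOfFinOrder (hq : ¬IsOfFinOrder q) {k : ℕ} (hk : 0 < k) :
    1 - q ^ k ≠ 0 :=
  sub_ne_zero.2 fun h => hq (isOfFinOrder_iff_pow_eq_one.2 ⟨k, hk, h.symm⟩)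

theorem one_sub_pow_mul_principalEsymm_succ (hq : ¬IsOfFinOrder q) (n : ℕ) :
    (1 - q ^ (n + 1)) * principalEsymm q (n + 1) = q ^ n * principalEsymm q n := by
  have hprod : ∏ i ∈ Icc 1 n, (1 - q ^ i) ≠ 0 :=
    prod_ne_zero_iff.2 fun i hi => one_sub_pow_ne_zero_of_not_isOfFinOrder hq (mem_Icc.1 hi).1
  have hlast := one_sub_pow_ne_zero_of_not_isOfFinOrder hq (by omega : 0 < n + 1)
  rw [principalEsymm, principalEsymm, Nat.triangle_succ, prod_Icc_succ_top (by omega),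
    pow_add q _ n]
  field_simp

theorem sum_range_neg_one_pow_mul_principalEsymm (hq : ¬IsOfFinOrder q) (n : ℕ) :
    ∑ k ∈ range (n + 1), (-1) ^ k * principalEsymm q (n - k) = q ^ n * principalEsymm q n := by
  induction n with
  | zero => simp
  | succ n ih =>
    rw [sum_range_succ']
    simp only [Nat.add_sub_add_right, pow_succ, mul_neg_one, neg_mul, sum_neg_distrib, ih,
      pow_zero, one_mul, Nat.sub_zero]
    linear_combination one_sub_pow_mul_principalEsymm_succ hq n

theorem one_sub_pow_mul_principalEsymm_add_succ (hq : ¬IsOfFinOrder q) (m k : ℕ) :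
    (1 - q ^ (m + k + 1)) * principalEsymm q (m + 1)
      = (1 - q ^ k) * principalEsymm q (m + 1) + q ^ (m + k) * principalEsymm q m := by
  linear_combination q ^ k * one_sub_pow_mul_principalEsymm_succ hq m

theorem natCast_mul_principalEsymm (hq : ¬IsOfFinOrder q) (n : ℕ) :
    n * principalEsymm q n
      = ∑ k ∈ Icc 1 n, (-1) ^ (k - 1) / (1 - q ^ k) * principalEsymm q (n - k) := by
  induction n with
  | zero => simp
  | succ n ih =>
    set c : ℕ → K := fun k => (-1) ^ (k - 1) / (1 - q ^ k)
    have hc {k : ℕ} (hk : 0 < k) : c k * (1 - q ^ k) = (-1) ^ (k - 1) :=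
      div_mul_cancel₀ _ (one_sub_pow_ne_zero_of_not_isOfFinOrder hq hk)
    have hterm : ∀ k ∈ Icc 1 n, (1 - q ^ (n + 1)) * (c k * principalEsymm q (n + 1 - k))
          = q ^ n * (c k * principalEsymm q (n - k))
            + (-1) ^ (k - 1) * principalEsymm q (n + 1 - k) := by
      intro k hk
      obtain ⟨m, rfl⟩ : ∃ m, n = m + k := ⟨n - k, by grind⟩
      rw [show m + k + 1 - k = m + 1 by omega, Nat.add_sub_cancel]
      linear_combination c k * one_sub_pow_mul_principalEsymm_add_succ hq m k
        + principalEsymm q (m + 1) * hc (k := k) (by grind)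
    have hlast : (1 - q ^ (n + 1)) * (c (n + 1) * principalEsymm q (n + 1 - (n + 1)))
        = (-1) ^ (n + 1 - 1) * principalEsymm q (n + 1 - (n + 1)) := by
      rw [← hc (by omega : 0 < n + 1)]
      ring
    have halt : ∑ k ∈ Icc 1 (n + 1), (-1) ^ (k - 1) * principalEsymm q (n + 1 - k)
        = q ^ n * principalEsymm q n := by
      rw [sum_Icc_one_eq_sum_range]
      simpa using sum_range_neg_one_pow_mul_principalEsymm hq n
    refine mul_left_cancel₀
      (one_sub_pow_ne_zero_of_not_isOfFinOrder hq (by omega : 0 < n + 1)) ?_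
    rw [mul_sum, sum_Icc_succ_top (by omega), sum_congr rfl hterm, hlast, sum_add_distrib,
      ← mul_sum, ← ih, add_assoc, ← sum_Icc_succ_top (by omega)
        (fun k => (-1) ^ (k - 1) * principalEsymm q (n + 1 - k)), halt]
    push_cast
    linear_combination (n + 1 : K) * one_sub_pow_mul_principalEsymm_succ hq n

end PrincipalEsymm

theorem RatFunc.not_isOfFinOrder_X {K : Type*} [Field K] : ¬IsOfFinOrder (X : RatFunc K) := by
  rw [isOfFinOrder_iff_pow_eq_one]
  rintro ⟨k, hk, hXk⟩
  exact transcendental_X (K := K)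
    ⟨Polynomial.X ^ k - Polynomial.C 1, Polynomial.X_pow_sub_C_ne_zero hk 1, by simp [hXk]⟩

theorem principal_specialization_esymm_general (n : ℕ) :
    (RatFunc.X : RatFunc ℚ) ^ (n * (n - 1) / 2) /
        ∏ i ∈ Finset.Icc 1 n, (1 - (RatFunc.X : RatFunc ℚ) ^ i) =
      ∑ μ : Nat.Partition n,
        ∏ l ∈ Finset.Icc 1 n,
          (1 / ((μ.parts.count l).factorial : RatFunc ℚ)) *
            ((-1) ^ (l - 1) /
                ((l : RatFunc ℚ) * (1 - (RatFunc.X : RatFunc ℚ) ^ l))) ^ (μ.parts.count l) := by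
  set q : RatFunc ℚ := RatFunc.X
  set a : ℕ → RatFunc ℚ := fun l => (-1) ^ (l - 1) / ((l : RatFunc ℚ) * (1 - q ^ l))
  have hka {k : ℕ} (hk : 0 < k) : k * a k = (-1) ^ (k - 1) / (1 - q ^ k) := by
    rw [mul_div_assoc', mul_div_mul_left _ _ (Nat.cast_ne_zero.2 hk.ne')]
  have hrec (m : ℕ) : m * partitionSum a m
      = ∑ k ∈ Icc 1 m, (-1) ^ (k - 1) / (1 - q ^ k) * partitionSum a (m - k) := by
    rw [natCast_mul_partitionSum]
    exact sum_congr rfl fun k hk => by rw [hka (mem_Icc.1 hk).1]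
  have hzero := (principalEsymm_zero q).trans (partitionSum_zero a).symm
  exact congrFun (eq_of_natCast_mul_eq_sum _ hzero
    (natCast_mul_principalEsymm RatFunc.not_isOfFinOrder_X) hrec) n

/-- **MPS paper, principal specialization of Lemma 3.1 (1).** In the field `ℚ(q)` of
rational functions, for every `n ≥ 1`:
`q^{n(n-1)/2}/((1-q)(1-q²)⋯(1-qⁿ)) = ∑_{m ⊢ n} ∏_{l ≥ 1} (1/m_l!)((-1)^{l-1}/(l(1-q^l)))^{m_l}`,
where the sum is over multiplicity vectors `m` with `∑ l·m_l = n`, encoded as partitions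
`μ` of `n` via `m_l = μ.parts.count l`. -/
theorem principal_specialization_esymm (n : ℕ) (hn : 1 ≤ n) :
    (RatFunc.X : RatFunc ℚ) ^ (n * (n - 1) / 2) /
        ∏ i ∈ Finset.Icc 1 n, (1 - (RatFunc.X : RatFunc ℚ) ^ i) =
      ∑ μ : Nat.Partition n,
        ∏ l ∈ Finset.Icc 1 n,
          (1 / ((μ.parts.count l).factorial : RatFunc ℚ)) *
            ((-1) ^ (l - 1) /
                ((l : RatFunc ℚ) * (1 - (RatFunc.X : RatFunc ℚ) ^ l))) ^ (μ.parts.count l) :=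
  principal_specialization_esymm_general n
end

section
/- Let (d_i, e_i)_{i=1,...,n} be a w-admissible decomposition of (d, e). Then for every nonempty subset I ⊊ {1,...,n} with I ≠ {1,...,n}, one has (w + ∑_{i∈I} e_i) · (∑_{i=1}^n d_i) > (w + ∑_{i=1}^n e_i) · (∑_{i∈I} d_i); equivalently, (w + ∑_{i∈I} e_i)/(∑_{i∈I} d_i) > (w + ∑_{i=1}^n e_i)/(∑_{i=1}^n d_i). -/
/-!
Write `D = ∑ d_i` and `E = w + ∑ e_i`. Admissibility at `k = n - 1` says `e_{n-1}/d_{n-1}` is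
below the slope of the first `n - 1` pieces, hence also below the mediant `E/D`; as the slopes
`e_i/d_i` increase, every piece has slope `< E/D`. So the complement `J` of `I` has slope
`(∑_J e_i)/(∑_J d_i) < E/D`, and since `E/D` is the mediant of that slope and
`(w + ∑_I e_i)/(∑_I d_i)`, the latter exceeds `E/D`.
-/

open Finset

section Slopes

variable {w n : ℕ} {d e : ℕ → ℕ}

theorem slope_le_slope_of_le (hd : ∀ i < n, 0 < d i)
    (hmono : ∀ i, i + 1 < n → e i * d (i + 1) ≤ e (i + 1) * d i)
    {i j : ℕ} (hij : i ≤ j) (hjn : j < n) : e i * d j ≤ e j * d i := by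
  induction j, hij using Nat.le_induction with
  | base => exact le_rfl
  | succ j hij ih =>
    have hprev := ih (by omega)
    have hstep := hmono j hjn
    refine Nat.le_of_mul_le_mul_right ?_ (hd j (by omega))
    calc e i * d (j + 1) * d j = e i * d j * d (j + 1) := by ring
      _ ≤ e j * d i * d (j + 1) := by gcongr
      _ = e j * d (j + 1) * d i := by ring
      _ ≤ e (j + 1) * d j * d i := by gcongr
      _ = e (j + 1) * d i * d j := by ring

theorem slope_lt_total_slope (hd : ∀ i < n, 0 < d i)
    (hmono : ∀ i, i + 1 < n → e i * d (i + 1) ≤ e (i + 1) * d i)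
    (hadm : ∀ k, 1 ≤ k → k < n →
      e k * ∑ i ∈ range k, d i < (w + ∑ i ∈ range k, e i) * d k)
    (hn : 2 ≤ n) {j : ℕ} (hj : j < n) :
    e j * ∑ i ∈ range n, d i < (w + ∑ i ∈ range n, e i) * d j := by
  obtain ⟨m, rfl⟩ : ∃ m, n = m + 1 := ⟨n - 1, by omega⟩
  have hlast : e m * ∑ i ∈ range (m + 1), d i < (w + ∑ i ∈ range (m + 1), e i) * d m := by
    have := hadm m (by omega) (by omega)
    rw [sum_range_succ, sum_range_succ]
    linarith
  have hjm := slope_le_slope_of_le hd hmono (Nat.lt_succ_iff.mp hj) (by omega)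
  refine Nat.lt_of_mul_lt_mul_right (a := d m) ?_
  calc (e j * ∑ i ∈ range (m + 1), d i) * d m
      = e j * d m * ∑ i ∈ range (m + 1), d i := by ring
    _ ≤ e m * d j * ∑ i ∈ range (m + 1), d i := by gcongr
    _ = (e m * ∑ i ∈ range (m + 1), d i) * d j := by ring
    _ < (w + ∑ i ∈ range (m + 1), e i) * d m * d j := by gcongr; exact hd j hj
    _ = (w + ∑ i ∈ range (m + 1), e i) * d j * d m := by ring

end Slopes

theorem admissible_subset_slope_general (n : ℕ) (w : ℕ) (d e : ℕ → ℕ)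
    (hd : ∀ i < n, 0 < d i)
    (hmono : ∀ i, i + 1 < n → e i * d (i + 1) ≤ e (i + 1) * d i)
    (hadm : ∀ k, 1 ≤ k → k < n →
      e k * ∑ i ∈ Finset.range k, d i < (w + ∑ i ∈ Finset.range k, e i) * d k)
    (I : Finset ℕ) (hI : I ⊆ Finset.range n) (hIne : I.Nonempty)
    (hIproper : I ≠ Finset.range n) :
    (w + ∑ i ∈ Finset.range n, e i) * ∑ i ∈ I, d i <
      (w + ∑ i ∈ I, e i) * ∑ i ∈ Finset.range n, d i := by
  obtain ⟨i, hi⟩ := hIne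
  obtain ⟨j, hj⟩ : (range n \ I).Nonempty := sdiff_nonempty.mpr fun h ↦ hIproper (hI.antisymm h)
  have hn : 2 ≤ n := by
    have := mem_range.mp (hI hi)
    have := mem_range.mp (mem_sdiff.mp hj).1
    have : i ≠ j := fun h ↦ (mem_sdiff.mp hj).2 (h ▸ hi)
    omega
  have hcompl : (∑ i ∈ range n \ I, e i) * ∑ i ∈ range n, d i <
      (w + ∑ i ∈ range n, e i) * ∑ i ∈ range n \ I, d i := by
    rw [sum_mul, mul_sum]
    exact sum_lt_sum_of_nonempty ⟨j, hj⟩ fun k hk ↦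
      slope_lt_total_slope hd hmono hadm hn (mem_range.mp (mem_sdiff.mp hk).1)
  rw [← sum_sdiff hI (f := e), ← sum_sdiff hI (f := d)] at hcompl ⊢
  linarith

/-- **MPS paper, Lemma 6.3 (2).** Let `(d_i, e_i)_{i=1,…,n}` (here indexed by
`i = 0,…,n-1`) be a `w`-admissible decomposition: all `d_i > 0`, the slopes `e_i/d_i`
weakly increase, and `(w + ∑_{i=1}^k e_i)/(∑_{i=1}^k d_i) > e_{k+1}/d_{k+1}` for
`k = 1,…,n-1`. Then for every nonempty proper subset `I ⊊ {1,…,n}` one has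
`(w + ∑_{i∈I} e_i)/(∑_{i∈I} d_i) > (w + ∑_{i=1}^n e_i)/(∑_{i=1}^n d_i)`, i.e., in
cross-multiplied form,
`(w + ∑_{i∈I} e_i)·(∑_{i=1}^n d_i) > (w + ∑_{i=1}^n e_i)·(∑_{i∈I} d_i)`. -/
theorem admissible_subset_slope (n : ℕ) (hn : 1 ≤ n) (w : ℕ) (d e : ℕ → ℕ)
    (hd : ∀ i < n, 0 < d i)
    (hmono : ∀ i, i + 1 < n → e i * d (i + 1) ≤ e (i + 1) * d i)
    (hadm : ∀ k, 1 ≤ k → k < n →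
      e k * ∑ i ∈ Finset.range k, d i < (w + ∑ i ∈ Finset.range k, e i) * d k)
    (I : Finset ℕ) (hI : I ⊆ Finset.range n) (hIne : I.Nonempty)
    (hIproper : I ≠ Finset.range n) :
    (w + ∑ i ∈ Finset.range n, e i) * ∑ i ∈ I, d i <
      (w + ∑ i ∈ I, e i) * ∑ i ∈ Finset.range n, d i :=
  admissible_subset_slope_general n w d e hd hmono hadm I hI hIne hIproper
end
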